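/- Let C be a small category with a Grothendieck topology J, let D be a category having all u-small limits, and let F : Cᵒᵖ ⥤ D. Let F' : (Cᵒᵖ ⥤ Type u)ᵒᵖ ⥤ D be a pointwise right Kan extension of F along the opposite of the Yoneda embedding yoneda.op : Cᵒᵖ ⥤ (Cᵒᵖ ⥤ Type u)ᵒᵖ. Then F is a J-sheaf (Presheaf.IsSheaf) if and only if for every object X of C and every J-covering sieve S on X, F' maps the opposite of the inclusion S.functorInclusion : S.functor ⟶ yoneda.obj X to an isomorphism in D. -/

import Mathlib

/-!
A pointwise right Kan extension along `yoneda.op` identifies maps `d ⟶ F'(P)` with natural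
families `P ⟶ Hom(d, F(-))`, naturally in the presheaf `P`. So `F'` inverts the inclusion
`S.functor ⟶ yoneda.obj X` exactly when, for every `d`, each natural family on `S.functor`
extends uniquely to `yoneda.obj X`: this is the Yoneda form of the sheaf condition for
`Hom(d, F(-))` on `S`.
-/

open CategoryTheory Limits Opposite

universe t w v u v₁ u₁

namespace CategoryTheory

variable {C : Type u₁} [Category.{v₁} C]

/-- Natural transformations `P ⟶ G` for presheaves valued in different universes, where
`P ⟶ G` does not typecheck. -/
@[ext]
structure HNatTrans (P : Cᵒᵖ ⥤ Type t) (G : Cᵒᵖ ⥤ Type w) where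
  app : ∀ X : Cᵒᵖ, P.obj X → G.obj X
  naturality : ∀ {X Y : Cᵒᵖ} (f : X ⟶ Y) (x : P.obj X), app Y (P.map f x) = G.map f (app X x)

namespace HNatTrans

variable {G : Cᵒᵖ ⥤ Type w}

def precomp {P Q : Cᵒᵖ ⥤ Type t} (f : Q ⟶ P) (u : HNatTrans P G) : HNatTrans Q G where
  app X x := u.app X (f.app X x)
  naturality g x := by rw [NatTrans.naturality_apply, u.naturality]

lemma app_yoneda {X : C} (u : HNatTrans (yoneda.obj X) G) {Y : C} (f : Y ⟶ X) :
    u.app (op Y) f = G.map f.op (u.app (op X) (𝟙 X)) := by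
  simpa using u.naturality f.op (𝟙 X)

def yonedaObjEquiv (X : C) : HNatTrans (yoneda.obj X) G ≃ G.obj (op X) where
  toFun u := u.app (op X) (𝟙 X)
  invFun a :=
    { app Y f := G.map f.op a
      naturality f x := by simp }
  left_inv u := by
    ext Y f
    exact (u.app_yoneda f).symm
  right_inv a := by simp

def sieveEquiv {X : C} (S : Sieve X) :
    HNatTrans S.functor G ≃ { x : S.arrows.FamilyOfElements G // x.Compatible } where
  toFun u := ⟨fun Y f hf => u.app (op Y) (⟨f, hf⟩ : S.functor.obj (op Y)),
    (Presieve.compatible_iff_sieveCompatible _).2 fun _ _ f g hf => u.naturality g.op ⟨f, hf⟩⟩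
  invFun x :=
    { app _ f := x.1 f.1 f.2
      naturality g f := x.2.to_sieveCompatible f.1 g.unop f.2 }
  left_inv _ := rfl
  right_inv _ := rfl

lemma precomp_functorInclusion_eq_iff {X : C} (S : Sieve X) (a : G.obj (op X))
    (x : { x : S.arrows.FamilyOfElements G // x.Compatible }) :
    ((yonedaObjEquiv X).symm a).precomp S.functorInclusion = (sieveEquiv S).symm x ↔
      x.1.IsAmalgamation a := by
  constructor
  · intro h Y f hf
    exact congrArg (fun u : HNatTrans S.functor G => u.app (op Y) ⟨f, hf⟩) h
  · intro h
    ext Y f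
    exact h f.1 f.2

end HNatTrans

theorem Presieve.isSheafFor_iff_bijective_precomp_functorInclusion (G : Cᵒᵖ ⥤ Type w) {X : C}
    (S : Sieve X) :
    Presieve.IsSheafFor G S.arrows ↔
      Function.Bijective (HNatTrans.precomp (G := G) S.functorInclusion) := by
  rw [Function.bijective_iff_existsUnique, (HNatTrans.sieveEquiv S).forall_congr_left,
    Subtype.forall]
  refine forall₂_congr fun x hx => ?_
  rw [(HNatTrans.yonedaObjEquiv X).existsUnique_congr_left]
  simp only [HNatTrans.precomp_functorInclusion_eq_iff]

section KanExtension

variable {D : Type v} [Category.{w} D] {F : Cᵒᵖ ⥤ D}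
  {F' : (Cᵒᵖ ⥤ Type v₁)ᵒᵖ ⥤ D} (α : yoneda.op ⋙ F' ⟶ F)

def restrictHom (d : D) (P : Cᵒᵖ ⥤ Type v₁) (g : d ⟶ F'.obj (op P)) :
    HNatTrans P (F ⋙ coyoneda.obj (op d)) where
  app X x := g ≫ F'.map (yonedaEquiv.symm x).op ≫ α.app X
  naturality f x := by
    have h := α.naturality f
    dsimp at h ⊢
    rw [yonedaEquiv_symm_map, op_comp, Functor.map_comp]
    simp only [Category.assoc, h]

lemma restrictHom_comp_map (d : D) {P Q : Cᵒᵖ ⥤ Type v₁} (f : Q ⟶ P) (g : d ⟶ F'.obj (op P)) :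
    restrictHom α d Q (g ≫ F'.map f.op) = (restrictHom α d P g).precomp f := by
  ext X x
  dsimp [restrictHom, HNatTrans.precomp]
  rw [← yonedaEquiv_symm_naturality_right, op_comp, Functor.map_comp]
  simp only [Category.assoc]

def HNatTrans.coneAt {d : D} {P : Cᵒᵖ ⥤ Type v₁} (t : HNatTrans P (F ⋙ coyoneda.obj (op d))) :
    Cone (StructuredArrow.proj (op P) yoneda.op ⋙ F) where
  pt := d
  π :=
    { app y := t.app y.right (yonedaEquiv y.hom.unop)
      naturality y₁ y₂ φ := by
        have hw := congrArg Quiver.Hom.unop (StructuredArrow.w φ)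
        have ht := t.naturality φ.right (yonedaEquiv y₁.hom.unop)
        dsimp at hw ht ⊢
        refine (Category.id_comp _).trans (Eq.trans ?_ ht)
        rw [← hw, ← yonedaEquiv_naturality]
        rfl }

lemma restrictHom_bijective {P : Cᵒᵖ ⥤ Type v₁}
    (hP : (Functor.RightExtension.mk F' α).IsPointwiseRightKanExtensionAt (op P)) (d : D) :
    Function.Bijective (restrictHom α d P) := by
  constructor
  · intro g g' h
    refine hP.hom_ext fun y => ?_
    have hy := congrArg (fun s => HNatTrans.app s y.right (yonedaEquiv y.hom.unop)) h
    simp only [restrictHom, Equiv.symm_apply_apply, Quiver.Hom.op_unop] at hy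
    exact hy
  · intro t
    refine ⟨hP.lift t.coneAt, ?_⟩
    ext X x
    have hfac := hP.fac t.coneAt (StructuredArrow.mk (yonedaEquiv.symm x).op)
    dsimp [HNatTrans.coneAt] at hfac
    simp only [Equiv.apply_symm_apply] at hfac
    exact hfac

lemma isIso_map_op_iff_bijective_precomp {P Q : Cᵒᵖ ⥤ Type v₁}
    (hP : (Functor.RightExtension.mk F' α).IsPointwiseRightKanExtensionAt (op P))
    (hQ : (Functor.RightExtension.mk F' α).IsPointwiseRightKanExtensionAt (op Q)) (f : Q ⟶ P) :
    IsIso (F'.map f.op) ↔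
      ∀ d : D, Function.Bijective (HNatTrans.precomp (G := F ⋙ coyoneda.obj (op d)) f) := by
  rw [isIso_iff_yoneda_map_bijective]
  refine forall_congr' fun d => ?_
  have hcomm : restrictHom α d Q ∘ (· ≫ F'.map f.op) =
      HNatTrans.precomp f ∘ restrictHom α d P :=
    funext (restrictHom_comp_map α d f)
  rw [← (restrictHom_bijective α hQ d).of_comp_iff', hcomm,
    Function.Bijective.of_comp_iff _ (restrictHom_bijective α hP d)]

end KanExtension

end CategoryTheory

theorem statement10 {C : Type u} [SmallCategory C] (J : GrothendieckTopology C)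
    {D : Type v} [Category.{w} D]
    (F : Cᵒᵖ ⥤ D) (F' : (Cᵒᵖ ⥤ Type u)ᵒᵖ ⥤ D) (α : yoneda.op ⋙ F' ⟶ F)
    (hpt : (Functor.RightExtension.mk F' α).IsPointwiseRightKanExtension) :
    Presheaf.IsSheaf J F ↔
      ∀ (X : C) (S : Sieve X), S ∈ J X → IsIso (F'.map S.functorInclusion.op) := by
  simp only [Presheaf.IsSheaf, Presieve.IsSheaf,
    Presieve.isSheafFor_iff_bijective_precomp_functorInclusion,
    isIso_map_op_iff_bijective_precomp α (hpt _) (hpt _)]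
  exact ⟨fun h X S hS d => h d S hS, fun h d X S hS => h X S hS d⟩
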